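/- arXiv:1805.00639 — 9 statements merged into one kernel-verified Lean document; each statement's English description precedes it below -/
import Mathlib

section
/- Let p and q be odd prime numbers with pq ≢ 1 (mod 8) and pq ≢ −1 (mod 8). Then there is no pair (w, z) ∈ ℚ₂ × ℚ₂ satisfying w² = 2 + 2pq·z⁴. -/
/-!
Substituting `z = (2T)⁻¹` when `z` is not integral puts any solution over `ℚ₂` into one of two
integral shapes, `W² = 2 + 2C·Z⁴` or `W² = 2·(2T)⁴ + 2C` with `C = pq`. Since `pq ≡ 3, 5 (mod 8)`,
neither has a solution modulo `16`: in the first, `2 + 2C·Z⁴` is `2`, `8` or `12` mod `16`, and in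
the second `2C` is `6` or `10` mod `16`, none of which is a square.
-/

namespace PadicInt

variable {p : ℕ} [Fact p.Prime]

theorem exists_sq_eq_of_sq_eq_coe {w : ℚ_[p]} {x : ℤ_[p]} (h : w ^ 2 = x) :
    ∃ W : ℤ_[p], W ^ 2 = x := by
  have hw : ‖w‖ ≤ 1 := by
    rw [← pow_le_one_iff_of_nonneg (norm_nonneg w) two_ne_zero, ← norm_pow, h]
    exact x.norm_le_one
  exact ⟨⟨w, hw⟩, Subtype.ext h⟩

theorem exists_of_sq_eq_add_mul_pow {a b : ℤ_[p]} {n : ℕ} {w z : ℚ_[p]}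
    (h : w ^ 2 = a + b * z ^ (2 * n)) :
    (∃ W Z : ℤ_[p], W ^ 2 = a + b * Z ^ (2 * n)) ∨
      ∃ W T : ℤ_[p], W ^ 2 = a * (p * T) ^ (2 * n) + b := by
  by_cases hz : ‖z‖ ≤ 1
  · let Z : ℤ_[p] := ⟨z, hz⟩
    obtain ⟨W, hW⟩ := exists_sq_eq_of_sq_eq_coe (x := a + b * Z ^ (2 * n)) (by push_cast; exact h)
    exact Or.inl ⟨W, Z, hW⟩
  · have hz0 : z ≠ 0 := by rintro rfl; simp at hz
    have hu : ‖z⁻¹‖ < 1 := by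
      rw [norm_inv]; exact inv_lt_one_of_one_lt₀ (not_le.mp hz)
    obtain ⟨T, hT⟩ := (norm_lt_one_iff_dvd ⟨z⁻¹, hu.le⟩).mp hu
    have hzT : z⁻¹ = p * (T : ℚ_[p]) := by simpa using congrArg ((↑) : ℤ_[p] → ℚ_[p]) hT
    have hsq : (w * z⁻¹ ^ n) ^ 2 = ((a * (p * T) ^ (2 * n) + b : ℤ_[p]) : ℚ_[p]) := by
      push_cast
      rw [← hzT, mul_pow, ← pow_mul, mul_comm n 2, h, add_mul, mul_assoc (b : ℚ_[p]),
        ← mul_pow, mul_inv_cancel₀ hz0, one_pow, mul_one]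
    obtain ⟨W, hW⟩ := exists_sq_eq_of_sq_eq_coe hsq
    exact Or.inr ⟨W, T, hW⟩

end PadicInt

theorem ZMod.sq_ne_two_add_two_mul_mul_pow_four :
    ∀ C W Z : ZMod 16, C.val % 8 = 3 ∨ C.val % 8 = 5 → W ^ 2 ≠ 2 + 2 * C * Z ^ 4 := by
  decide

theorem ZMod.sq_ne_two_mul :
    ∀ C W : ZMod 16, C.val % 8 = 3 ∨ C.val % 8 = 5 → W ^ 2 ≠ 2 * C := by
  decide

theorem PadicInt.not_exists_sq_eq_two_add_two_mul_mul_pow_four {C : ℤ_[2]}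
    (hC : (toZModPow 4 C).val % 8 = 3 ∨ (toZModPow 4 C).val % 8 = 5) :
    ¬∃ w z : ℚ_[2], w ^ 2 = 2 + 2 * C * z ^ 4 := by
  rintro ⟨w, z, h⟩
  rcases exists_of_sq_eq_add_mul_pow (a := 2) (b := 2 * C) (n := 2) (by push_cast; exact h) with
    ⟨W, Z, hWZ⟩ | ⟨W, T, hWT⟩
  · apply ZMod.sq_ne_two_add_two_mul_mul_pow_four _ (toZModPow 4 W) (toZModPow 4 Z) hC
    simpa [map_ofNat] using congrArg (toZModPow 4) hWZ
  · apply ZMod.sq_ne_two_mul _ (toZModPow 4 W) hC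
    have h16 : (16 : ZMod (2 ^ 4)) = 0 := by decide
    have hmod := congrArg (toZModPow 4) hWT
    simp only [map_pow, map_add, map_mul, map_ofNat, Nat.cast_ofNat] at hmod
    linear_combination hmod + 2 * toZModPow 4 T ^ 4 * h16

/-- For odd primes `p, q` with `pq ≢ ±1 (mod 8)`, the equation
`w² = 2 + 2pq·z⁴` has no solution `(w, z) ∈ ℚ₂ × ℚ₂`. -/
theorem stmt3 (p q : ℕ) (hp : p.Prime) (hq : q.Prime) (hp2 : p ≠ 2) (hq2 : q ≠ 2)
    (h1 : (p * q) % 8 ≠ 1) (h7 : (p * q) % 8 ≠ 7) :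
    ¬∃ w z : ℚ_[2], w ^ 2 = 2 + 2 * (p : ℚ_[2]) * (q : ℚ_[2]) * z ^ 4 := by
  have hodd : (p * q) % 2 = 1 :=
    Nat.odd_iff.mp ((hp.odd_of_ne_two hp2).mul (hq.odd_of_ne_two hq2))
  have hpq : (PadicInt.toZModPow 4 ((p * q : ℕ) : ℤ_[2])).val % 8 = 3 ∨
      (PadicInt.toZModPow 4 ((p * q : ℕ) : ℤ_[2])).val % 8 = 5 := by
    rw [map_natCast, ZMod.val_natCast]
    omega
  simpa [mul_assoc] using PadicInt.not_exists_sq_eq_two_add_two_mul_mul_pow_four hpq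
end

section
/- Let p and q be distinct prime numbers with p ≡ 3 (mod 4). Then there is no pair (w, z) ∈ ℚ_p × ℚ_p satisfying w² + 1 = pq·z⁴. -/
/-!
The `p`-adic valuation of `p q z⁴` is `1 + 4 v(z)`, which is odd. On the other side, `w² + 1`
has even valuation: if `v(w) < 0` it is `2 v(w)`, and if `w` is integral then `w² + 1` is a
unit, since otherwise reducing modulo `p` would make `-1` a square in `ZMod p`, which fails
for `p ≡ 3 (mod 4)`.
-/

section

variable {p : ℕ} [hp : Fact p.Prime]

theorem PadicInt.isUnit_sq_add_one (hp4 : p % 4 = 3) (w : ℤ_[p]) : IsUnit (w ^ 2 + 1) := by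
  by_contra hunit
  have hker : w ^ 2 + 1 ∈ RingHom.ker (PadicInt.toZMod (p := p)) := by
    rwa [PadicInt.ker_toZMod, IsLocalRing.mem_maximalIdeal, mem_nonunits_iff]
  have hsq : PadicInt.toZMod w ^ 2 = -1 := by
    rw [RingHom.mem_ker, map_add, map_pow, map_one] at hker
    linear_combination hker
  exact ZMod.exists_sq_eq_neg_one_iff.mp ⟨_, hsq.symm.trans (sq _)⟩ hp4

namespace Padic

theorem valuation_eq_of_norm_eq {x y : ℚ_[p]} (hx : x ≠ 0) (hy : y ≠ 0) (h : ‖x‖ = ‖y‖) :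
    x.valuation = y.valuation := by
  rw [norm_eq_zpow_neg_valuation hx, norm_eq_zpow_neg_valuation hy,
    zpow_right_inj₀ (mod_cast hp.out.pos) (mod_cast hp.out.ne_one), neg_inj] at h
  exact h

theorem norm_sq_add_one_of_norm_le_one (hp4 : p % 4 = 3) {w : ℚ_[p]} (hw : ‖w‖ ≤ 1) :
    ‖w ^ 2 + 1‖ = 1 :=
  PadicInt.isUnit_iff.mp (PadicInt.isUnit_sq_add_one hp4 ⟨w, hw⟩)

theorem sq_ne_neg_one (hp4 : p % 4 = 3) (w : ℚ_[p]) : w ^ 2 ≠ -1 := by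
  intro hw
  have hnorm : ‖w‖ = 1 := by
    simpa [pow_eq_one_iff_of_nonneg (norm_nonneg w) two_ne_zero] using congrArg norm hw
  simpa [hw] using norm_sq_add_one_of_norm_le_one hp4 hnorm.le

theorem even_valuation_sq_add_one (hp4 : p % 4 = 3) (w : ℚ_[p]) :
    Even (w ^ 2 + 1).valuation := by
  have hne : w ^ 2 + 1 ≠ 0 := fun h => sq_ne_neg_one hp4 w (eq_neg_of_add_eq_zero_left h)
  rcases le_or_gt ‖w‖ 1 with hw | hw
  · have hnorm : ‖w ^ 2 + 1‖ = ‖(1 : ℚ_[p])‖ := by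
      rw [norm_sq_add_one_of_norm_le_one hp4 hw, norm_one]
    simp [valuation_eq_of_norm_eq hne one_ne_zero hnorm]
  · have hw2 : ‖(1 : ℚ_[p])‖ < ‖w ^ 2‖ := by
      rw [norm_one, norm_pow]; exact one_lt_pow₀ hw two_ne_zero
    have hnorm : ‖w ^ 2 + 1‖ = ‖w ^ 2‖ := by
      rw [add_eq_max_of_ne hw2.ne', max_eq_left hw2.le]
    have hw0 : w ≠ 0 := by rintro rfl; norm_num at hw
    rw [valuation_eq_of_norm_eq hne (pow_ne_zero 2 hw0) hnorm, valuation_pow]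
    exact ⟨w.valuation, by push_cast; ring⟩

theorem odd_valuation_mul_mul_pow_four {q : ℕ} (hq : ¬p ∣ q) {z : ℚ_[p]} (hz : z ≠ 0) :
    Odd ((p : ℚ_[p]) * q * z ^ 4).valuation := by
  have hp0 : (p : ℚ_[p]) ≠ 0 := Nat.cast_ne_zero.mpr hp.out.ne_zero
  have hq0 : (q : ℚ_[p]) ≠ 0 := Nat.cast_ne_zero.mpr fun h => hq (h ▸ dvd_zero p)
  rw [valuation_mul (mul_ne_zero hp0 hq0) (pow_ne_zero 4 hz), valuation_mul hp0 hq0,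
    valuation_p, valuation_natCast, padicValNat.eq_zero_of_not_dvd hq, valuation_pow]
  exact ⟨2 * z.valuation, by push_cast; ring⟩

end Padic

end

/-- For distinct primes `p, q` with `p ≡ 3 (mod 4)`, the equation
`w² + 1 = pq·z⁴` has no solution `(w, z) ∈ ℚ_p × ℚ_p`. -/
theorem stmt4 (p q : ℕ) [hp : Fact p.Prime] (hq : q.Prime) (hpq : p ≠ q)
    (hp4 : p % 4 = 3) :
    ¬∃ w z : ℚ_[p], w ^ 2 + 1 = (p : ℚ_[p]) * (q : ℚ_[p]) * z ^ 4 := by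
  rintro ⟨w, z, h⟩
  have hz : z ≠ 0 := by
    rintro rfl
    exact Padic.sq_ne_neg_one hp4 w (by linear_combination h)
  have hp_ndvd_q : ¬p ∣ q := (Nat.prime_dvd_prime_iff_eq hp.out hq).not.mpr hpq
  have heven := Padic.even_valuation_sq_add_one hp4 w
  rw [h] at heven
  exact Int.not_even_iff_odd.mpr (Padic.odd_valuation_mul_mul_pow_four hp_ndvd_q hz) heven
end

section
/- Let p and q be odd prime numbers. Then there is no pair (w, z) ∈ ℚ₂ × ℚ₂ satisfying 2w² + 4 = pq·z⁴. -/
/-!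
Compare 2-adic valuations. For `w ≠ 0` the term `2 * w ^ 2` has odd valuation `1 + 2 v(w)`,
while `4` has valuation `2`; the two never agree, so `2 * w ^ 2 + 4` is nonzero and its
valuation is their minimum, which is odd or equal to `2`, hence never a multiple of `4`.
On the other side `p * q` is a `2`-adic unit, so `p * q * z ^ 4` is either `0` or has
valuation `4 v(z)`.
-/

namespace Padic

variable {p : ℕ} [Fact p.Prime]

theorem norm_lt_norm_of_valuation_lt {x y : ℚ_[p]} (hx : x ≠ 0)
    (h : x.valuation < y.valuation) : ‖y‖ < ‖x‖ := by
  obtain rfl | hy := eq_or_ne y 0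
  · simpa using hx
  rw [norm_eq_zpow_neg_valuation hx, norm_eq_zpow_neg_valuation hy]
  exact zpow_lt_zpow_right₀ (mod_cast (Fact.out : p.Prime).one_lt) (neg_lt_neg h)

theorem add_ne_zero_of_valuation_lt {x y : ℚ_[p]} (hx : x ≠ 0)
    (h : x.valuation < y.valuation) : x + y ≠ 0 := by
  have hlt := norm_lt_norm_of_valuation_lt hx h
  rw [← norm_pos_iff, add_eq_max_of_ne hlt.ne', max_eq_left hlt.le]
  exact norm_pos_iff.mpr hx

theorem valuation_add_of_lt {x y : ℚ_[p]} (hx : x ≠ 0)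
    (h : x.valuation < y.valuation) : (x + y).valuation = x.valuation := by
  have hlt := norm_lt_norm_of_valuation_lt hx h
  have hnorm : ‖x + y‖ = ‖x‖ := by rw [add_eq_max_of_ne hlt.ne', max_eq_left hlt.le]
  rw [norm_eq_zpow_neg_valuation (add_ne_zero_of_valuation_lt hx h),
    norm_eq_zpow_neg_valuation hx,
    zpow_right_inj₀ (mod_cast (Fact.out : p.Prime).pos) (mod_cast (Fact.out : p.Prime).ne_one),
    neg_inj] at hnorm
  exact hnorm

theorem valuation_natCast_of_not_dvd {n : ℕ} (h : ¬p ∣ n) : (n : ℚ_[p]).valuation = 0 := by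
  rw [valuation_natCast, padicValNat.eq_zero_of_not_dvd h, Nat.cast_zero]

theorem valuation_natCast_mul_pow_of_not_dvd {n : ℕ} (hn : ¬p ∣ n) {z : ℚ_[p]} (hz : z ≠ 0)
    (k : ℕ) : ((n : ℚ_[p]) * z ^ k).valuation = k * z.valuation := by
  have hn0 : (n : ℚ_[p]) ≠ 0 := Nat.cast_ne_zero.mpr (by rintro rfl; exact hn (dvd_zero p))
  rw [valuation_mul hn0 (pow_ne_zero k hz), valuation_natCast_of_not_dvd hn, valuation_pow,
    zero_add]

end Padic

open Padic

theorem two_mul_sq_add_four_ne_zero_and_not_four_dvd_valuation (w : ℚ_[2]) :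
    2 * w ^ 2 + 4 ≠ 0 ∧ ¬(4 : ℤ) ∣ (2 * w ^ 2 + 4).valuation := by
  have hv4 : (4 : ℚ_[2]).valuation = 2 := by
    rw [show (4 : ℚ_[2]) = 2 ^ 2 by norm_num, valuation_pow]
    simp
  have h4 : (4 : ℚ_[2]) ≠ 0 := by norm_num
  obtain rfl | hw := eq_or_ne w 0
  · rw [zero_pow two_ne_zero, mul_zero, zero_add, hv4]
    exact ⟨h4, by decide⟩
  have hA : (2 : ℚ_[2]) * w ^ 2 ≠ 0 := mul_ne_zero two_ne_zero (pow_ne_zero 2 hw)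
  have hvA : (2 * w ^ 2 : ℚ_[2]).valuation = 1 + 2 * w.valuation := by simp [hw]
  rcases lt_or_gt_of_ne (show (2 * w ^ 2 : ℚ_[2]).valuation ≠ (4 : ℚ_[2]).valuation by omega)
    with hlt | hgt
  · exact ⟨add_ne_zero_of_valuation_lt hA hlt, by rw [valuation_add_of_lt hA hlt]; omega⟩
  · rw [add_comm]
    exact ⟨add_ne_zero_of_valuation_lt h4 hgt, by rw [valuation_add_of_lt h4 hgt]; omega⟩

/-- For odd primes `p, q`, the equation `2w² + 4 = pq·z⁴` has no solution
`(w, z) ∈ ℚ₂ × ℚ₂`. -/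
theorem stmt5 (p q : ℕ) (hp : p.Prime) (hq : q.Prime) (hp2 : p ≠ 2) (hq2 : q ≠ 2) :
    ¬∃ w z : ℚ_[2], 2 * w ^ 2 + 4 = (p : ℚ_[2]) * (q : ℚ_[2]) * z ^ 4 := by
  rintro ⟨w, z, h⟩
  obtain ⟨hne, hndvd⟩ := two_mul_sq_add_four_ne_zero_and_not_four_dvd_valuation w
  have hz : z ≠ 0 := by
    rintro rfl
    exact hne (by simpa using h)
  have hpq : ¬2 ∣ p * q := by
    rw [Nat.prime_two.dvd_mul]
    exact not_or_intro (hp.odd_of_ne_two hp2).not_two_dvd_nat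
      (hq.odd_of_ne_two hq2).not_two_dvd_nat
  apply hndvd
  rw [h, ← Nat.cast_mul, valuation_natCast_mul_pow_of_not_dvd hpq hz]
  exact dvd_mul_right _ _
end

section
/- Let p and q be odd prime numbers. Then there is no pair (w, z) ∈ ℚ₂ × ℚ₂ satisfying 2w² = 4 − pq·z⁴. -/
/-!
The 2-adic valuation of `2 w²` is odd, while `4` has valuation `2` and `p q z⁴` has valuation
divisible by `4`, `p q` being a 2-adic unit. These two valuations differ, so `4 - p q z⁴` has the
smaller of them as its valuation, which is even. Using the additive valuation with values in
`WithTop ℤ` covers `w = 0` and `z = 0` in the same argument.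
-/

theorem AddValuation.map_sub_of_distinct_val {R Γ₀ : Type*} [Ring R]
    [LinearOrderedAddCommMonoidWithTop Γ₀] (v : AddValuation R Γ₀) {x y : R} (h : v x ≠ v y) :
    v (x - y) = min (v x) (v y) := by
  rw [sub_eq_add_neg, v.map_add_of_distinct_val (by rwa [v.map_neg]), v.map_neg]

theorem WithTop.two_ne_four_nsmul (b : WithTop ℤ) : (2 : WithTop ℤ) ≠ 4 • b := by
  induction b using WithTop.recTopCoe with
  | top => simp [succ_nsmul]
  | coe n =>
    rw [← WithTop.coe_ofNat, ← WithTop.coe_nsmul, WithTop.coe_eq_coe.ne, nsmul_eq_mul]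
    omega

theorem WithTop.one_add_two_nsmul_ne_min_two_four_nsmul (a b : WithTop ℤ) :
    1 + 2 • a ≠ min 2 (4 • b) := by
  intro h
  induction a using WithTop.recTopCoe with
  | top =>
    simp only [succ_nsmul, zero_nsmul, zero_add, WithTop.add_top] at h
    exact WithTop.not_top_le_coe 2 (h.le.trans (min_le_left _ _))
  | coe m =>
    induction b using WithTop.recTopCoe with
    | top =>
      simp only [succ_nsmul, zero_nsmul, zero_add, WithTop.add_top, min_top_right] at h
      simp only [← WithTop.coe_ofNat, ← WithTop.coe_one, ← WithTop.coe_add,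
        WithTop.coe_eq_coe] at h
      omega
    | coe n =>
      simp only [← WithTop.coe_ofNat, ← WithTop.coe_nsmul, ← WithTop.coe_one, ← WithTop.coe_add,
        ← WithTop.coe_min, WithTop.coe_eq_coe, nsmul_eq_mul] at h
      omega

namespace Padic

variable {p : ℕ} [Fact p.Prime]

theorem addValuation_p : addValuation (p : ℚ_[p]) = 1 := by
  rw [addValuation.apply (Nat.cast_ne_zero.2 (Fact.out : p.Prime).ne_zero), valuation_p]
  rfl

theorem addValuation_eq_zero_of_norm_eq_one {u : ℚ_[p]} (hu : ‖u‖ = 1) : addValuation u = 0 := by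
  have hu0 : u ≠ 0 := norm_ne_zero_iff.1 (by simp [hu])
  rw [norm_eq_zpow_neg_valuation hu0, zpow_eq_one_iff_right₀ (by positivity)
    (Nat.cast_ne_one.2 (Fact.out : p.Prime).ne_one), neg_eq_zero] at hu
  rw [addValuation.apply hu0, hu]
  rfl

theorem not_exists_two_mul_sq_eq_four_sub_mul_pow_four {u : ℚ_[2]} (hu : ‖u‖ = 1) :
    ¬∃ w z : ℚ_[2], 2 * w ^ 2 = 4 - u * z ^ 4 := by
  rintro ⟨w, z, h⟩
  set v : AddValuation ℚ_[2] (WithTop ℤ) := addValuation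
  have hv2 : v 2 = 1 := by exact_mod_cast addValuation_p
  have hv4 : v 4 = 2 := by
    rw [show (4 : ℚ_[2]) = 2 ^ 2 by norm_num, v.map_pow, hv2]
    rfl
  have hvw : v (2 * w ^ 2) = 1 + 2 • v w := by rw [v.map_mul, v.map_pow, hv2]
  have hvz : v (u * z ^ 4) = 4 • v z := by
    rw [v.map_mul, v.map_pow, addValuation_eq_zero_of_norm_eq_one hu, zero_add]
  have hne : v 4 ≠ v (u * z ^ 4) := by
    rw [hv4, hvz]
    exact WithTop.two_ne_four_nsmul _
  have key := congrArg v h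
  rw [hvw, v.map_sub_of_distinct_val hne, hv4, hvz] at key
  exact WithTop.one_add_two_nsmul_ne_min_two_four_nsmul _ _ key

end Padic

/-- For odd primes `p, q`, the equation `2w² = 4 − pq·z⁴` has no solution
`(w, z) ∈ ℚ₂ × ℚ₂`. -/
theorem stmt6 (p q : ℕ) (hp : p.Prime) (hq : q.Prime) (hp2 : p ≠ 2) (hq2 : q ≠ 2) :
    ¬∃ w z : ℚ_[2], 2 * w ^ 2 = 4 - (p : ℚ_[2]) * (q : ℚ_[2]) * z ^ 4 := by
  have norm_odd_prime {n : ℕ} (hn : n.Prime) (hn2 : n ≠ 2) : ‖(n : ℚ_[2])‖ = 1 :=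
    Padic.norm_natCast_eq_one_iff.2 (Nat.coprime_two_left.2 (hn.odd_of_ne_two hn2))
  apply Padic.not_exists_two_mul_sq_eq_four_sub_mul_pow_four
  rw [norm_mul, norm_odd_prime hp hp2, norm_odd_prime hq hq2, one_mul]
end

section
/- Let u₁, u₂, u₃ be integers none of which is divisible by 3. The equation u₁X³ + u₂Y³ + u₃Z³ = 0 has a solution (X, Y, Z) ∈ ℚ₃³ with (X, Y, Z) ≠ (0, 0, 0) if and only if there exist indices i ≠ j in {1, 2, 3} such that u_i ≡ u_j (mod 9) or u_i ≡ −u_j (mod 9). -/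
/-!
A nontrivial solution can be scaled so that one coordinate is `1` and all are `3`-adic integers.
Modulo `9` every cube is `0` or `±1`, and a unit has cube `±1`; so reducing the equation modulo
`9` gives a relation `±uᵢ ± uⱼ (± uₖ) ≡ 0`, and a finite check over `(ℤ/9)ˣ` shows that two
coefficients agree up to sign. Conversely, if `uᵢ ≡ ∓uⱼ (mod 9)` then `∓uⱼ/uᵢ ≡ 1 (mod 9)`, and
every `3`-adic integer `1 + 9k` is a cube by Hensel's lemma; a cube root `t` of `∓uⱼ/uᵢ` gives the
solution `(t, 1, 0)` up to order and sign.
-/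

open Polynomial

lemma intCast_eq_or_eq_neg_iff_modEq {n : ℕ} {a b : ℤ} :
    ((a : ZMod n) = b ∨ (a : ZMod n) = -b) ↔ a ≡ b [ZMOD n] ∨ a ≡ -b [ZMOD n] := by
  rw [← ZMod.intCast_eq_intCast_iff, ← ZMod.intCast_eq_intCast_iff, Int.cast_neg]

lemma ZMod.eq_or_eq_neg_of_diagonal_cubic_eq_zero {a b c x y z : ZMod 9}
    (ha : IsUnit a) (hb : IsUnit b) (hc : IsUnit c) (hxyz : IsUnit x ∨ IsUnit y ∨ IsUnit z)
    (h : a * x ^ 3 + b * y ^ 3 + c * z ^ 3 = 0) :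
    (a = b ∨ a = -b) ∨ (a = c ∨ a = -c) ∨ (b = c ∨ b = -c) := by
  have hcube : ∀ w : ZMod 9, w ^ 3 = 0 ∨ w ^ 3 = 1 ∨ w ^ 3 = -1 := by decide
  have hunit : ∀ w : ZMod 9, IsUnit w → w ^ 3 ≠ 0 := by decide
  have hne : ¬(x ^ 3 = 0 ∧ y ^ 3 = 0 ∧ z ^ 3 = 0) := by
    rintro ⟨hx, hy, hz⟩
    rcases hxyz with hxyz | hxyz | hxyz
    exacts [hunit x hxyz hx, hunit y hxyz hy, hunit z hxyz hz]
  have hx := hcube x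
  have hy := hcube y
  have hz := hcube z
  generalize x ^ 3 = e at hx hne h
  generalize y ^ 3 = f at hy hne h
  generalize z ^ 3 = g at hz hne h
  rcases hx with rfl | rfl | rfl <;> rcases hy with rfl | rfl | rfl <;>
    rcases hz with rfl | rfl | rfl <;> (revert ha hb hc hne h; revert a b c; decide)

namespace PadicInt

variable {p : ℕ} [Fact p.Prime]

lemma isUnit_intCast_of_not_dvd {k : ℤ} (hk : ¬(p : ℤ) ∣ k) : IsUnit (k : ℤ_[p]) :=
  isUnit_iff.2 ((norm_le_one _).eq_of_not_lt (by rwa [norm_intCast_lt_one_iff]))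

lemma exists_eq_one_of_diagonal_form_eq_zero (n : ℕ) (a b c : ℤ_[p]) {X Y Z : ℚ_[p]}
    (hXYZ : (X, Y, Z) ≠ (0, 0, 0)) (h : a * X ^ n + b * Y ^ n + c * Z ^ n = 0) :
    ∃ x y z : ℤ_[p], (x = 1 ∨ y = 1 ∨ z = 1) ∧ a * x ^ n + b * y ^ n + c * z ^ n = 0 := by
  classical
  obtain ⟨w, hw, hmax⟩ := Finset.exists_max_image {X, Y, Z} (‖·‖) (Finset.insert_nonempty _ _)
  simp only [Finset.mem_insert, Finset.mem_singleton, forall_eq_or_imp, forall_eq] at hw hmax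
  obtain ⟨hX, hY, hZ⟩ := hmax
  have hw0 : w ≠ 0 := by
    rintro rfl
    simp_all [norm_le_zero_iff]
  have lift {V : ℚ_[p]} (hV : ‖V‖ ≤ ‖w‖) : ∃ v : ℤ_[p], (v : ℚ_[p]) = V / w :=
    ⟨⟨V / w, by rw [norm_div]; exact div_le_one_of_le₀ hV (norm_nonneg _)⟩, rfl⟩
  obtain ⟨x, hx⟩ := lift hX
  obtain ⟨y, hy⟩ := lift hY
  obtain ⟨z, hz⟩ := lift hZ
  refine ⟨x, y, z, ?_, PadicInt.ext ?_⟩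
  · rcases hw with rfl | rfl | rfl
    · exact Or.inl (PadicInt.ext (by simp [hx, hw0]))
    · exact Or.inr (Or.inl (PadicInt.ext (by simp [hy, hw0])))
    · exact Or.inr (Or.inr (PadicInt.ext (by simp [hz, hw0])))
  · push_cast [hx, hy, hz]
    linear_combination w⁻¹ ^ n * h

-- `1 + 3k` is a cube root of `1 + 9k` modulo `27`, which is enough precision for Hensel's lemma.
lemma exists_pow_three_eq_one_add_nine_mul (k : ℤ_[3]) : ∃ t : ℤ_[3], t ^ 3 = 1 + 9 * k := by
  set F : ℤ_[3][X] := X ^ 3 - C (1 + 9 * k)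
  have h3 : ‖(3 : ℤ_[3])‖ = 3⁻¹ := by exact_mod_cast norm_p (p := 3)
  have h3k : ‖3 * k‖ < 1 := by
    rw [norm_mul, h3]; nlinarith [norm_le_one k]
  have hunit : ‖1 + 3 * k‖ = 1 := by
    rw [norm_add_eq_max_of_ne (by rw [norm_one]; exact h3k.ne'), norm_one, max_eq_left h3k.le]
  have hF : F.aeval (1 + 3 * k) = 3 ^ 3 * (k ^ 2 * (1 + k)) := by simp [F]; ring
  have hF' : F.derivative.aeval (1 + 3 * k) = 3 * (1 + 3 * k) ^ 2 := by
    simp [F, derivative_pow]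
  obtain ⟨t, ht, -⟩ := hensels_lemma (F := F) (a := 1 + 3 * k) <| by
    rw [hF, hF', norm_mul (3 ^ 3), norm_mul 3, norm_pow, norm_pow, hunit, h3]
    nlinarith [norm_le_one (k ^ 2 * (1 + k))]
  exact ⟨t, by simpa [F, sub_eq_zero] using ht⟩

lemma exists_mul_pow_three_add_eq_zero_of_modEq_neg {a b : ℤ} (ha : ¬3 ∣ a)
    (hab : a ≡ -b [ZMOD 9]) : ∃ t : ℤ_[3], a * t ^ 3 + b = 0 := by
  obtain ⟨v, hv⟩ := (isUnit_intCast_of_not_dvd (p := 3) (by exact_mod_cast ha)).exists_right_inv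
  obtain ⟨m, hm⟩ := hab.dvd
  obtain ⟨t, ht⟩ := exists_pow_three_eq_one_add_nine_mul (m * v)
  refine ⟨t, ?_⟩
  have hm' : (-b - a : ℤ_[3]) = 9 * m := by exact_mod_cast hm
  linear_combination a * ht + 9 * m * hv - hm'

lemma exists_mul_pow_three_add_eq_zero {a b : ℤ} (ha : ¬3 ∣ a)
    (hab : a ≡ b [ZMOD 9] ∨ a ≡ -b [ZMOD 9]) : ∃ t : ℤ_[3], a * t ^ 3 + b = 0 := by
  rcases hab with hab | hab
  · obtain ⟨t, ht⟩ :=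
      exists_mul_pow_three_add_eq_zero_of_modEq_neg ha (b := -b) (by rwa [neg_neg])
    exact ⟨-t, by push_cast at ht; linear_combination -ht⟩
  · exact exists_mul_pow_three_add_eq_zero_of_modEq_neg ha hab

end PadicInt

/-- Let `u₁, u₂, u₃` be integers none of which is divisible by `3`. The
equation `u₁X³ + u₂Y³ + u₃Z³ = 0` has a nontrivial solution in `ℚ₃` if and only if
`u_i ≡ ±u_j (mod 9)` for some `i ≠ j`. -/
theorem stmt8 (u : Fin 3 → ℤ) (hu : ∀ i, ¬(3 ∣ u i)) :
    (∃ X Y Z : ℚ_[3], (X, Y, Z) ≠ (0, 0, 0) ∧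
        (u 0 : ℚ_[3]) * X ^ 3 + (u 1 : ℚ_[3]) * Y ^ 3 + (u 2 : ℚ_[3]) * Z ^ 3 = 0) ↔
      ∃ i j : Fin 3, i ≠ j ∧ (u i ≡ u j [ZMOD 9] ∨ u i ≡ -u j [ZMOD 9]) := by
  constructor
  · rintro ⟨X, Y, Z, hXYZ, h⟩
    obtain ⟨x, y, z, hxyz, h⟩ :=
      PadicInt.exists_eq_one_of_diagonal_form_eq_zero 3 (u 0) (u 1) (u 2) hXYZ (by exact_mod_cast h)
    have hmod := congrArg (PadicInt.toZModPow 2) h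
    simp only [map_add, map_mul, map_pow, map_intCast, map_zero] at hmod
    have hunit (i : Fin 3) : IsUnit (u i : ZMod 9) := by
      simpa using (PadicInt.isUnit_intCast_of_not_dvd (p := 3) (by exact_mod_cast hu i)).map
        (PadicInt.toZModPow 2)
    have hxyz' : IsUnit (PadicInt.toZModPow 2 x) ∨ IsUnit (PadicInt.toZModPow 2 y) ∨
        IsUnit (PadicInt.toZModPow 2 z) := by
      rcases hxyz with rfl | rfl | rfl <;> simp
    rcases ZMod.eq_or_eq_neg_of_diagonal_cubic_eq_zero (hunit 0) (hunit 1) (hunit 2) hxyz' hmod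
      with h | h | h
    exacts [⟨0, 1, by decide, intCast_eq_or_eq_neg_iff_modEq.1 h⟩,
      ⟨0, 2, by decide, intCast_eq_or_eq_neg_iff_modEq.1 h⟩,
      ⟨1, 2, by decide, intCast_eq_or_eq_neg_iff_modEq.1 h⟩]
  · rintro ⟨i, j, hij, hmod⟩
    obtain ⟨t, ht⟩ := PadicInt.exists_mul_pow_three_add_eq_zero (hu i) hmod
    let x : Fin 3 → ℚ_[3] := fun k ↦ if k = i then t else if k = j then 1 else 0
    have hcoe : (u i : ℚ_[3]) * (t : ℚ_[3]) ^ 3 + u j = 0 := by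
      exact_mod_cast congrArg ((↑) : ℤ_[3] → ℚ_[3]) ht
    refine ⟨x 0, x 1, x 2, ?_, ?_⟩ <;>
      fin_cases i <;> fin_cases j <;> simp [x] at hij hcoe ⊢ <;> linear_combination hcoe
end

section
/- Let p and q be prime numbers with p ≥ 5, q ≥ 5, p ≡ 2 or −2 (mod 9), and q ≡ 2 or −2 (mod 9). Then none of the three equations X³ + 2Y³ + pq·Z³ = 0, X³ + q·Y³ + 2p·Z³ = 0, and X³ + p·Y³ + 2q·Z³ = 0 has a solution (X, Y, Z) ∈ ℚ₃³ with (X, Y, Z) ≠ (0, 0, 0). -/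
/-! Cubes in `ℤ₃` are `0` or `±1` mod 9, and `0` only for non-units. Dividing a nontrivial
`ℚ₃`-solution by a coordinate of largest norm gives a `ℤ₃`-solution with a unit coordinate;
mod 9 it reads `u + B v + C w = 0` with `u, v, w ∈ {0, ±1}` not all `0`, `B = ±2`, `C = ±4`,
and no such combination vanishes. -/

theorem ZMod.cubes_eq_zero_of_cube_add_mul_cube_add_mul_cube_eq_zero {a b c B C : ZMod 9}
    (hB : B = 2 ∨ B = -2) (hC : C = 4 ∨ C = -4) (h : a ^ 3 + B * b ^ 3 + C * c ^ 3 = 0) :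
    a ^ 3 = 0 ∧ b ^ 3 = 0 ∧ c ^ 3 = 0 := by
  revert a b c
  rcases hB with rfl | rfl <;> rcases hC with rfl | rfl <;> decide

theorem Padic.exists_primitive_scaling {p : ℕ} [Fact p.Prime] {X Y Z : ℚ_[p]}
    (h : (X, Y, Z) ≠ (0, 0, 0)) :
    ∃ (s : ℚ_[p]) (x y z : ℤ_[p]), (x : ℚ_[p]) = s * X ∧ (y : ℚ_[p]) = s * Y ∧
      (z : ℚ_[p]) = s * Z ∧ (IsUnit x ∨ IsUnit y ∨ IsUnit z) := by
  classical
  obtain ⟨w, hw, hmax⟩ := Finset.exists_max_image {X, Y, Z} (‖·‖) (by simp)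
  have hw0 : w ≠ 0 := by
    rintro rfl
    simp only [Finset.mem_insert, Finset.mem_singleton, forall_eq_or_imp, forall_eq,
      norm_zero, norm_le_zero_iff] at hmax
    simp_all
  have lift : ∀ T ∈ ({X, Y, Z} : Finset ℚ_[p]), ∃ t : ℤ_[p], (t : ℚ_[p]) = w⁻¹ * T :=
    fun T hT => ⟨⟨w⁻¹ * T, by
      rw [norm_mul, norm_inv]
      exact inv_mul_le_one_of_le₀ (hmax T hT) (norm_nonneg _)⟩, rfl⟩
  obtain ⟨x, hx⟩ := lift X (by simp)
  obtain ⟨y, hy⟩ := lift Y (by simp)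
  obtain ⟨z, hz⟩ := lift Z (by simp)
  have isUnit_of_eq : ∀ t : ℤ_[p], (t : ℚ_[p]) = w⁻¹ * w → IsUnit t := fun t ht => by
    rw [PadicInt.ext (ht.trans ((inv_mul_cancel₀ hw0).trans PadicInt.coe_one.symm))]
    exact isUnit_one
  refine ⟨w⁻¹, x, y, z, hx, hy, hz, ?_⟩
  simp only [Finset.mem_insert, Finset.mem_singleton] at hw
  rcases hw with rfl | rfl | rfl
  exacts [Or.inl (isUnit_of_eq x hx), Or.inr (Or.inl (isUnit_of_eq y hy)),
    Or.inr (Or.inr (isUnit_of_eq z hz))]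

theorem PadicInt.not_isUnit_of_cube_add_mul_cube_add_mul_cube_eq_zero {x y z b c : ℤ_[3]}
    (hb : toZModPow 2 b = 2 ∨ toZModPow 2 b = -2) (hc : toZModPow 2 c = 4 ∨ toZModPow 2 c = -4)
    (h : x ^ 3 + b * y ^ 3 + c * z ^ 3 = 0) : ¬(IsUnit x ∨ IsUnit y ∨ IsUnit z) := by
  have : Fact (1 < 9) := ⟨by norm_num⟩
  let φ : ℤ_[3] →+* ZMod 9 := toZModPow 2
  have hmod : φ x ^ 3 + φ b * φ y ^ 3 + φ c * φ z ^ 3 = 0 := by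
    simpa only [map_add, map_mul, map_pow, map_zero] using congrArg φ h
  obtain ⟨hx, hy, hz⟩ := ZMod.cubes_eq_zero_of_cube_add_mul_cube_add_mul_cube_eq_zero hb hc hmod
  have cube_ne_zero : ∀ t : ℤ_[3], IsUnit t → φ t ^ 3 ≠ 0 := fun t ht =>
    ((ht.map φ).pow 3).ne_zero
  rintro (hu | hu | hu)
  exacts [cube_ne_zero x hu hx, cube_ne_zero y hu hy, cube_ne_zero z hu hz]

theorem Padic.not_exists_ne_zero_cube_add_mul_cube_add_mul_cube_eq_zero {b c : ℤ_[3]}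
    (hb : PadicInt.toZModPow 2 b = 2 ∨ PadicInt.toZModPow 2 b = -2)
    (hc : PadicInt.toZModPow 2 c = 4 ∨ PadicInt.toZModPow 2 c = -4) :
    ¬∃ X Y Z : ℚ_[3], (X, Y, Z) ≠ (0, 0, 0) ∧ X ^ 3 + b * Y ^ 3 + c * Z ^ 3 = 0 := by
  rintro ⟨X, Y, Z, hne, heq⟩
  obtain ⟨s, x, y, z, hx, hy, hz, hunit⟩ := Padic.exists_primitive_scaling hne
  refine PadicInt.not_isUnit_of_cube_add_mul_cube_add_mul_cube_eq_zero hb hc ?_ hunit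
  apply PadicInt.ext
  push_cast [hx, hy, hz]
  linear_combination s ^ 3 * heq

theorem PadicInt.toZModPow_natCast_eq_two_or_neg_two {n : ℕ} (h : n % 9 = 2 ∨ n % 9 = 7) :
    toZModPow 2 (n : ℤ_[3]) = 2 ∨ toZModPow 2 (n : ℤ_[3]) = -2 := by
  rw [map_natCast]
  change (n : ZMod 9) = 2 ∨ (n : ZMod 9) = -2
  rw [← ZMod.natCast_mod]
  rcases h with h | h <;> rw [h] <;> decide

theorem PadicInt.toZModPow_natCast_mul_eq_four_or_neg_four {m n : ℕ}
    (hm : m % 9 = 2 ∨ m % 9 = 7) (hn : n % 9 = 2 ∨ n % 9 = 7) :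
    toZModPow 2 ((m : ℤ_[3]) * (n : ℤ_[3])) = 4 ∨
      toZModPow 2 ((m : ℤ_[3]) * (n : ℤ_[3])) = -4 := by
  rw [map_mul]
  rcases toZModPow_natCast_eq_two_or_neg_two hm with h | h <;>
    rcases toZModPow_natCast_eq_two_or_neg_two hn with h' | h' <;> rw [h, h'] <;> decide

theorem stmt9_general (p q : ℕ)
    (hp9 : p % 9 = 2 ∨ p % 9 = 7) (hq9 : q % 9 = 2 ∨ q % 9 = 7) :
    (¬∃ X Y Z : ℚ_[3], (X, Y, Z) ≠ (0, 0, 0) ∧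
        X ^ 3 + 2 * Y ^ 3 + (p : ℚ_[3]) * (q : ℚ_[3]) * Z ^ 3 = 0) ∧
    (¬∃ X Y Z : ℚ_[3], (X, Y, Z) ≠ (0, 0, 0) ∧
        X ^ 3 + (q : ℚ_[3]) * Y ^ 3 + 2 * (p : ℚ_[3]) * Z ^ 3 = 0) ∧
    (¬∃ X Y Z : ℚ_[3], (X, Y, Z) ≠ (0, 0, 0) ∧
        X ^ 3 + (p : ℚ_[3]) * Y ^ 3 + 2 * (q : ℚ_[3]) * Z ^ 3 = 0) :=
  open PadicInt Padic in by
  have h2 : 2 % 9 = 2 ∨ 2 % 9 = 7 := Or.inl rfl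
  refine ⟨?_, ?_, ?_⟩
  · exact_mod_cast not_exists_ne_zero_cube_add_mul_cube_add_mul_cube_eq_zero
      (toZModPow_natCast_eq_two_or_neg_two h2) (toZModPow_natCast_mul_eq_four_or_neg_four hp9 hq9)
  · exact_mod_cast not_exists_ne_zero_cube_add_mul_cube_add_mul_cube_eq_zero
      (toZModPow_natCast_eq_two_or_neg_two hq9) (toZModPow_natCast_mul_eq_four_or_neg_four h2 hp9)
  · exact_mod_cast not_exists_ne_zero_cube_add_mul_cube_add_mul_cube_eq_zero
      (toZModPow_natCast_eq_two_or_neg_two hp9) (toZModPow_natCast_mul_eq_four_or_neg_four h2 hq9)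

/-- Let `p, q ≥ 5` be primes with `p ≡ ±2 (mod 9)` and `q ≡ ±2 (mod 9)`.
Then none of `X³ + 2Y³ + pq·Z³ = 0`, `X³ + qY³ + 2p·Z³ = 0`, `X³ + pY³ + 2q·Z³ = 0`
has a nontrivial solution in `ℚ₃`. -/
theorem stmt9 (p q : ℕ) (hp : p.Prime) (hq : q.Prime) (hp5 : 5 ≤ p) (hq5 : 5 ≤ q)
    (hp9 : p % 9 = 2 ∨ p % 9 = 7) (hq9 : q % 9 = 2 ∨ q % 9 = 7) :
    (¬∃ X Y Z : ℚ_[3], (X, Y, Z) ≠ (0, 0, 0) ∧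
        X ^ 3 + 2 * Y ^ 3 + (p : ℚ_[3]) * (q : ℚ_[3]) * Z ^ 3 = 0) ∧
    (¬∃ X Y Z : ℚ_[3], (X, Y, Z) ≠ (0, 0, 0) ∧
        X ^ 3 + (q : ℚ_[3]) * Y ^ 3 + 2 * (p : ℚ_[3]) * Z ^ 3 = 0) ∧
    (¬∃ X Y Z : ℚ_[3], (X, Y, Z) ≠ (0, 0, 0) ∧
        X ^ 3 + (p : ℚ_[3]) * Y ^ 3 + 2 * (q : ℚ_[3]) * Z ^ 3 = 0) :=
  stmt9_general p q hp9 hq9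
end

section
/- Let p and q be prime numbers with p ≥ 5 and q ≥ 5. Then the equation X³ − 3X²Y − 9XY² + 3Y³ + 6pq·Z³ = 0 has no solution (X, Y, Z) ∈ ℚ₂³ with (X, Y, Z) ≠ (0, 0, 0). -/
/-!
Substituting `X = Y + 2T` turns the form `X³ − 3X²Y − 9XY² + 3Y³` into `8·(T³ − 3TY² − Y³)`, so the
equation becomes `4·G(T, Y) = −3pq·Z³` with `G(T, Y) = T³ − 3TY² − Y³`. Since `G` has no nontrivial
zero modulo 2, `‖G(T, Y)‖ = max(‖T‖, ‖Y‖)³`, while `3pq` is a 2-adic unit. Comparing norms gives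
`‖Z‖³ = 2⁻²·max(‖T‖, ‖Y‖)³`, which is impossible for nonzero values because 3 does not divide 2.
-/

def cubicG {R : Type*} [CommRing R] (t y : R) : R := t ^ 3 - 3 * t * y ^ 2 - y ^ 3

lemma map_cubicG {R S : Type*} [CommRing R] [CommRing S] (f : R →+* S) (t y : R) :
    f (cubicG t y) = cubicG (f t) (f y) := by
  simp [cubicG, map_ofNat]

lemma cubicG_mul {R : Type*} [CommRing R] (s t y : R) :
    cubicG (s * t) (s * y) = s ^ 3 * cubicG t y := by
  unfold cubicG; ring

lemma cubicG_ne_zero_zmod_two : ∀ t y : ZMod 2, t ≠ 0 ∨ y ≠ 0 → cubicG t y ≠ 0 := by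
  decide

lemma exists_norm_eq_max {E : Type*} [Norm E] (t y : E) :
    ∃ s, (s = t ∨ s = y) ∧ ‖s‖ = max ‖t‖ ‖y‖ := by
  rcases max_choice ‖t‖ ‖y‖ with h | h
  exacts [⟨t, .inl rfl, h.symm⟩, ⟨y, .inr rfl, h.symm⟩]

lemma max_norm_eq_zero_iff {E : Type*} [NormedAddCommGroup E] {t y : E} :
    max ‖t‖ ‖y‖ = 0 ↔ t = 0 ∧ y = 0 := by
  simp [le_antisymm_iff]

lemma PadicInt.norm_eq_one_iff_toZMod_ne_zero {p : ℕ} [Fact p.Prime] {x : ℤ_[p]} :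
    ‖x‖ = 1 ↔ toZMod x ≠ 0 := by
  rw [← isUnit_iff, ne_eq, ← RingHom.mem_ker, ker_toZMod, IsLocalRing.mem_maximalIdeal,
    mem_nonunits_iff, not_not]

lemma PadicInt.norm_cubicG_eq_one {t y : ℤ_[2]} (h : ‖t‖ = 1 ∨ ‖y‖ = 1) :
    ‖cubicG t y‖ = 1 := by
  simp only [norm_eq_one_iff_toZMod_ne_zero, map_cubicG] at h ⊢
  exact cubicG_ne_zero_zmod_two _ _ h

lemma Padic.norm_cubicG (t y : ℚ_[2]) : ‖cubicG t y‖ = max ‖t‖ ‖y‖ ^ 3 := by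
  obtain ⟨s, hs, hsmax⟩ := exists_norm_eq_max t y
  obtain rfl | hs0 := eq_or_ne s 0
  · obtain ⟨rfl, rfl⟩ := max_norm_eq_zero_iff.1 (hsmax ▸ norm_zero)
    simp [cubicG]
  have hle : ∀ u : ℚ_[2], ‖u‖ ≤ ‖s‖ → ‖u / s‖ ≤ 1 := fun u hu => by
    rw [norm_div]; exact div_le_one_of_le₀ hu (norm_nonneg _)
  let t' : ℤ_[2] := ⟨t / s, hle t (hsmax ▸ le_max_left _ _)⟩
  let y' : ℤ_[2] := ⟨y / s, hle y (hsmax ▸ le_max_right _ _)⟩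
  have hunit : ‖t'‖ = 1 ∨ ‖y'‖ = 1 := by
    simp only [t', y']
    rcases hs with rfl | rfl <;> simp [hs0]
  have hscale : cubicG t y = s ^ 3 * PadicInt.Coe.ringHom (cubicG t' y') := by
    rw [map_cubicG, ← cubicG_mul]
    change _ = cubicG (s * (t / s)) (s * (y / s))
    rw [mul_div_cancel₀ _ hs0, mul_div_cancel₀ _ hs0]
  rw [hscale, norm_mul, norm_pow]
  change ‖s‖ ^ 3 * ‖cubicG t' y'‖ = _
  rw [PadicInt.norm_cubicG_eq_one hunit, mul_one, hsmax]

lemma Padic.eq_zero_of_norm_pow_eq_zpow_mul {p : ℕ} [Fact p.Prime] {z w : ℚ_[p]} {n : ℕ} {k : ℤ}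
    (hn : n ≠ 0) (hk : ¬(n : ℤ) ∣ k) (h : ‖z‖ ^ n = (p : ℝ) ^ k * ‖w‖ ^ n) : w = 0 := by
  have hp : (1 : ℝ) < p := mod_cast (Fact.out : p.Prime).one_lt
  by_contra hw
  obtain rfl | hz := eq_or_ne z 0
  · rw [norm_zero, zero_pow hn] at h
    exact (mul_pos (zpow_pos (zero_lt_one.trans hp) k) (pow_pos (norm_pos_iff.2 hw) n)).ne h
  rw [norm_eq_zpow_neg_valuation hz, norm_eq_zpow_neg_valuation hw, ← zpow_natCast,
    ← zpow_natCast, ← zpow_mul, ← zpow_mul, ← zpow_add₀ (zero_lt_one.trans hp).ne',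
    zpow_right_inj₀ (zero_lt_one.trans hp) hp.ne'] at h
  exact hk ⟨w.valuation - z.valuation, by linarith⟩

/-- Let `p, q ≥ 5` be primes. Then the equation
`X³ − 3X²Y − 9XY² + 3Y³ + 6pq·Z³ = 0` has no nontrivial solution in `ℚ₂`. -/
theorem stmt10 (p q : ℕ) (hp : p.Prime) (hq : q.Prime) (hp5 : 5 ≤ p) (hq5 : 5 ≤ q) :
    ¬∃ X Y Z : ℚ_[2], (X, Y, Z) ≠ (0, 0, 0) ∧
      X ^ 3 - 3 * X ^ 2 * Y - 9 * X * Y ^ 2 + 3 * Y ^ 3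
        + 6 * (p : ℚ_[2]) * (q : ℚ_[2]) * Z ^ 3 = 0 := by
  rintro ⟨X, Y, Z, hne, heq⟩
  set T := (X - Y) / 2 with hT
  have hc : ‖((3 * p * q : ℕ) : ℚ_[2])‖ = 1 := by
    rw [Padic.norm_natCast_eq_one_iff, Nat.coprime_two_left]
    exact ((by decide : Odd 3).mul (hp.odd_of_ne_two (by omega))).mul
      (hq.odd_of_ne_two (by omega))
  have hcubic : (2 : ℚ_[2]) ^ 2 * cubicG T Y = -((3 * p * q : ℕ) : ℚ_[2]) * Z ^ 3 := by
    rw [hT, cubicG]; push_cast; linear_combination heq / 2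
  have hnorm : ‖Z‖ ^ 3 = (2 : ℝ) ^ (-2 : ℤ) * max ‖T‖ ‖Y‖ ^ 3 := by
    have h4 : ‖(2 : ℚ_[2]) ^ 2‖ = (2 : ℝ) ^ (-2 : ℤ) := by
      simpa using Padic.norm_p_pow (p := 2) 2
    have := congrArg norm hcubic
    rwa [norm_mul, norm_mul, norm_neg, hc, one_mul, norm_pow Z, Padic.norm_cubicG, h4,
      eq_comm] at this
  obtain ⟨s, -, hsmax⟩ := exists_norm_eq_max T Y
  rw [← hsmax] at hnorm
  have hs0 : s = 0 := Padic.eq_zero_of_norm_pow_eq_zpow_mul three_ne_zero (by decide) hnorm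
  obtain ⟨hT0, hY0⟩ := max_norm_eq_zero_iff.1 (hsmax ▸ hs0 ▸ norm_zero)
  have hZ0 : Z = 0 := by simpa [hs0] using hnorm
  have hX0 : X = 0 := by linear_combination -2 * hT + 2 * hT0 + hY0
  exact hne (by simp [hX0, hY0, hZ0])
end

section
/- Let p and q be distinct odd prime numbers and let b be an integer with 2b² = p + q, and set a = (p − q)/2. Then the point P = (b², a·b) lies on the elliptic curve E : y² = x³ − pq·x over ℚ, and P has infinite order in the group E(ℚ); that is, n·P is not the point at infinity for every positive integer n. -/
/-!
On `y² = x³ - N x` with `N > 0`, the doubling formula `x(2R) = ((x² + N) / 2y)²` shows that every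
double has positive `x`-coordinate. If `N = pq` is not a square, the only nonzero `2`-torsion
point is `T = (0, 0)`. A point `P` of finite order would make one of `P`, `T`, `P + T` a double
(according to the `2`-adic valuation of its order); but `x(T) = 0`, `x(P + T) = -N / x(P) < 0`,
and for `P = (b², ab)` the doubling formula factors so that a half of `P` would make `2p` or `2q`
a rational square, which is impossible for odd `p`, `q`.
-/

open WeierstrassCurve.Affine

lemma not_isOfFinAddOrder_of_forall_add_self_ne {G : Type*} [AddCommGroup G] {P T : G}
    (hT : ∀ S : G, S + S = 0 → S ≠ 0 → S = T) (hP : ∀ R : G, R + R ≠ P)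
    (hT' : ∀ R : G, R + R ≠ T) (hPT : ∀ R : G, R + R ≠ P + T) : ¬IsOfFinAddOrder P := by
  intro hfin
  have hd := hfin.addOrderOf_pos
  have hdP : addOrderOf P • P = 0 := addOrderOf_nsmul_eq_zero P
  obtain ⟨k, hk | hk⟩ := Nat.even_or_odd' (addOrderOf P)
  · have hkT : k • P = T := by
      refine hT _ (by rw [← add_nsmul, ← two_mul, ← hk, hdP]) ?_
      exact nsmul_ne_zero_of_lt_addOrderOf (by omega) (by omega)
    obtain ⟨j, hj | hj⟩ := Nat.even_or_odd' k
    · exact hT' (j • P) (by rw [← add_nsmul, ← two_mul, ← hj, hkT])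
    · refine hPT ((j + 1) • P) ?_
      rw [← add_nsmul, show j + 1 + (j + 1) = k + 1 by omega, succ_nsmul, hkT, add_comm]
  · refine hP ((k + 1) • P) ?_
    rw [← add_nsmul, show k + 1 + (k + 1) = addOrderOf P + 1 by omega, succ_nsmul, hdP, zero_add]

namespace XCubedSubMulX

variable {F : Type*} [Field F]

abbrev W (N : F) : WeierstrassCurve.Affine F := ⟨0, 0, 0, -N, 0⟩

variable {N : F}

lemma equation_iff {x y : F} : (W N).Equation x y ↔ y ^ 2 = x ^ 3 - N * x := by
  rw [WeierstrassCurve.Affine.equation_iff]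
  constructor <;> intro h <;> linear_combination h

lemma negY_eq (x y : F) : (W N).negY x y = -y := by
  simp [WeierstrassCurve.Affine.negY]

lemma nonsingular_of_two_mul_ne_zero {x y : F} (h : y ^ 2 = x ^ 3 - N * x) (hy : 2 * y ≠ 0) :
    (W N).Nonsingular x y := by
  rw [nonsingular_iff]
  exact ⟨equation_iff.mpr h, Or.inr fun h' ↦ hy (by linear_combination h')⟩

lemma nonsingular_zero (hN : N ≠ 0) : (W N).Nonsingular 0 0 := by
  rw [nonsingular_iff]
  exact ⟨equation_iff.mpr (by ring), Or.inl (by simpa using hN)⟩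

def origin (hN : N ≠ 0) : (W N).Point := .some 0 0 (nonsingular_zero hN)

variable [DecidableEq F]

lemma x_eq_of_add_self_eq {x₁ y₁ x y : F} {h₁ : (W N).Nonsingular x₁ y₁}
    {h : (W N).Nonsingular x y} (hR : Point.some _ _ h₁ + Point.some _ _ h₁ = Point.some _ _ h) :
    2 * y₁ ≠ 0 ∧ x = ((x₁ ^ 2 + N) / (2 * y₁)) ^ 2 := by
  have hy : y₁ ≠ (W N).negY x₁ y₁ := fun hy ↦
    Point.some_ne_zero h ((Point.add_self_of_Y_eq hy).symm.trans hR).symm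
  have hy₂ : 2 * y₁ ≠ 0 := by rw [negY_eq] at hy; contrapose! hy; linear_combination hy
  refine ⟨hy₂, ?_⟩
  rw [Point.add_self_of_Y_ne hy, Point.some.injEq] at hR
  have hslope : (W N).slope x₁ x₁ y₁ y₁ = (3 * x₁ ^ 2 - N) / (2 * y₁) := by
    rw [slope_of_Y_ne rfl hy, negY_eq]
    ring_nf
  have h2 : (2 : F) ≠ 0 := left_ne_zero_of_mul hy₂
  have hy₁ : y₁ ≠ 0 := right_ne_zero_of_mul hy₂
  rw [← hR.1, hslope, addX]
  field_simp
  linear_combination (-8 * x₁) * equation_iff.mp h₁.1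

lemma eq_origin_of_add_self_eq_zero [NeZero (2 : F)] (hN : ¬IsSquare N) {T : (W N).Point}
    (h2 : T + T = 0) (h0 : T ≠ 0) : T = origin (fun h : N = 0 ↦ hN (h ▸ .zero)) := by
  rcases T with _ | ⟨x, y, h⟩
  · exact absurd rfl h0
  have hy : y = (W N).negY x y := by
    by_contra hy
    exact Point.some_ne_zero _ ((Point.add_self_of_Y_ne hy).symm.trans h2)
  have hy₀ : y = 0 := by
    rw [negY_eq, eq_neg_iff_add_eq_zero, ← two_mul] at hy
    exact (mul_eq_zero.mp hy).resolve_left two_ne_zero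
  have hx₀ : x = 0 := by
    have hx : x * (x * x - N) = 0 := by linear_combination -(equation_iff.mp h.1) + y * hy₀
    exact (mul_eq_zero.mp hx).resolve_right fun hx ↦ hN ⟨x, by linear_combination -hx⟩
  subst hx₀ hy₀
  rfl

lemma isSquare_two_mul_or_of_add_self_eq {p q b y : F} (hb : p + q = 2 * b ^ 2) (hb₀ : b ≠ 0)
    {h : (W (p * q)).Nonsingular (b ^ 2) y} (R : (W (p * q)).Point)
    (hR : R + R = .some _ _ h) : IsSquare (2 * p) ∨ IsSquare (2 * q) := by
  rcases R with _ | ⟨x₁, y₁, h₁⟩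
  · exact absurd hR.symm (Point.some_ne_zero h)
  obtain ⟨hy₁, hx⟩ := x_eq_of_add_self_eq hR
  have hdouble : b ^ 2 * (2 * y₁) ^ 2 = (x₁ ^ 2 + p * q) ^ 2 := by
    rw [hx, div_pow, div_mul_cancel₀ _ (pow_ne_zero 2 hy₁)]
  -- `p`, `q` are the roots of `X² - 2b²X + pq`, so the doubling relation splits into two factors.
  have hfactor : (x₁ ^ 2 - 2 * p * x₁ - p * q) * (x₁ ^ 2 - 2 * q * x₁ - p * q) = 0 := by
    linear_combination -hdouble + 4 * b ^ 2 * equation_iff.mp h₁.1 - 2 * x₁ * (x₁ ^ 2 - p * q) * hb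
  rcases mul_eq_zero.mp hfactor with hc | hc
  · refine .inl ⟨(x₁ - p) / b, ?_⟩
    field_simp
    linear_combination -hc - p * hb
  · refine .inr ⟨(x₁ - q) / b, ?_⟩
    field_simp
    linear_combination -hc - q * hb

section Ordered

variable [LinearOrder F] [IsStrictOrderedRing F]

lemma x_pos_of_add_self_eq (hN : 0 < N) (R : (W N).Point) {x y : F}
    {h : (W N).Nonsingular x y} (hR : R + R = .some _ _ h) : 0 < x := by
  rcases R with _ | ⟨x₁, y₁, h₁⟩
  · exact absurd hR.symm (Point.some_ne_zero h)
  obtain ⟨hy₁, rfl⟩ := x_eq_of_add_self_eq hR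
  positivity

lemma add_self_ne_origin (hN : 0 < N) (R : (W N).Point) : R + R ≠ origin hN.ne' :=
  fun hR ↦ (x_pos_of_add_self_eq hN R hR).false

lemma add_self_ne_some_add_origin (hN : 0 < N) {x₁ y₁ : F} {h₁ : (W N).Nonsingular x₁ y₁}
    (hx₁ : 0 < x₁) (R : (W N).Point) : R + R ≠ .some _ _ h₁ + origin hN.ne' := by
  rw [origin, Point.add_of_X_ne hx₁.ne']
  intro hR
  have hpos := x_pos_of_add_self_eq hN R hR
  have hx : (W N).addX x₁ 0 ((W N).slope x₁ 0 y₁ 0) = -N / x₁ := by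
    rw [slope_of_X_ne hx₁.ne', addX]
    field_simp
    linear_combination x₁ * equation_iff.mp h₁.1
  rw [hx] at hpos
  exact (div_neg_of_neg_of_pos (neg_neg_of_pos hN) hx₁).not_gt hpos

end Ordered

end XCubedSubMulX

lemma Rat.not_isSquare_two_mul_of_odd {m : ℕ} (hm : Odd m) : ¬IsSquare (2 * m : ℚ) := by
  rw [← Nat.cast_ofNat, ← Nat.cast_mul, Rat.isSquare_natCast_iff]
  rintro ⟨r, hr⟩
  obtain ⟨s, rfl⟩ : Even r := by
    have : Even (r * r) := hr ▸ even_two_mul m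
    simpa [Nat.even_mul] using this
  exact Nat.not_even_iff_odd.mpr hm ⟨s * s, by linarith⟩

lemma Rat.not_isSquare_mul_of_prime {p q : ℕ} (hp : p.Prime) (hq : q.Prime) (hpq : p ≠ q) :
    ¬IsSquare (p * q : ℚ) := by
  rw [← Nat.cast_mul, Rat.isSquare_natCast_iff]
  rintro ⟨r, hr⟩
  have hsq : Squarefree (p * q) := Nat.squarefree_mul_iff.mpr
    ⟨(Nat.coprime_primes hp hq).mpr hpq, hp.prime.squarefree, hq.prime.squarefree⟩
  have hr₁ : r = 1 := Nat.isUnit_iff.mp (hsq r (hr ▸ dvd_rfl))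
  rw [hr₁] at hr
  exact hp.ne_one (Nat.eq_one_of_mul_eq_one_right hr)

open XCubedSubMulX in
/-- Let `p, q` be distinct odd primes, `b` an integer with `2b² = p + q`,
and `a = (p − q)/2`. Then `P = (b², a·b)` lies on `E : y² = x³ − pq·x` and has infinite
order in `E(ℚ)`. -/
theorem stmt13 (p q : ℕ) (hp : p.Prime) (hq : q.Prime) (hp2 : p ≠ 2) (hq2 : q ≠ 2)
    (hpq : p ≠ q) (b : ℤ) (hb : 2 * b ^ 2 = (p : ℤ) + q)
    (a : ℤ) (ha : 2 * a = (p : ℤ) - q) :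
    ∃ hns : WeierstrassCurve.Affine.Nonsingular
        (⟨0, 0, 0, -((p : ℚ) * q), 0⟩ : WeierstrassCurve.Affine ℚ)
        ((b : ℚ) ^ 2) ((a : ℚ) * b),
      ∀ n : ℕ, 0 < n → n • (WeierstrassCurve.Affine.Point.some _ _ hns) ≠ 0 := by
  have hb' : (2 : ℚ) * b ^ 2 = p + q := by exact_mod_cast hb
  have ha' : (2 : ℚ) * a = p - q := by exact_mod_cast ha
  have hp₀ : (0 : ℚ) < p := by exact_mod_cast hp.pos
  have hq₀ : (0 : ℚ) < q := by exact_mod_cast hq.pos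
  have hN : (0 : ℚ) < p * q := mul_pos hp₀ hq₀
  have hb₀ : (b : ℚ) ≠ 0 := by rintro h; rw [h] at hb'; linarith
  have ha₀ : (a : ℚ) ≠ 0 := by
    rintro h
    exact hpq (by exact_mod_cast (by rw [h] at ha'; linarith : (p : ℚ) = q))
  -- `pq = b⁴ - a²`, since `p = b² + a` and `q = b² - a`.
  have hns : (W ((p : ℚ) * q)).Nonsingular (b ^ 2) (a * b) :=
    nonsingular_of_two_mul_ne_zero
      (by linear_combination (b ^ 2 / 4) * (-(2 * b ^ 2 + p + q) * hb' + (2 * a + p - q) * ha'))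
      (by simp [ha₀, hb₀])
  refine ⟨hns, fun n hn hnP ↦ ?_⟩
  refine not_isOfFinAddOrder_of_forall_add_self_ne
    (fun S ↦ eq_origin_of_add_self_eq_zero (Rat.not_isSquare_mul_of_prime hp hq hpq))
    (fun R hR ↦ ?_) (add_self_ne_origin hN) (add_self_ne_some_add_origin hN (by positivity))
    (isOfFinAddOrder_iff_nsmul_eq_zero.mpr ⟨n, hn, hnP⟩)
  rcases isSquare_two_mul_or_of_add_self_eq (by linarith) hb₀ R hR with h | h
  exacts [Rat.not_isSquare_two_mul_of_odd (hp.odd_of_ne_two hp2) h,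
    Rat.not_isSquare_two_mul_of_odd (hq.odd_of_ne_two hq2) h]
end

section
/- Let p and q be distinct odd prime numbers with pq ≢ ±1 (mod 8), and let D = {±1, ±2, ±p, ±q, ±2p, ±2q, ±pq, ±2pq}. For d ∈ D, say that d is everywhere locally admissible if the equation d·w² = d² + 4pq·z⁴ has a solution with (w, z) ≠ (0, 0) in each of the fields ℝ, ℚ₂, ℚ_p, and ℚ_q. Then every everywhere locally admissible d ∈ D belongs to {1, p, q, pq, 2p, 2q, 2pq}. -/
lemma key16 : ∀ (c W A B : ZMod (2^4)), (c = 3 ∨ c = 5 ∨ c = 11 ∨ c = 13) →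
    (A = 1 ∨ B = 1) → W ^ 2 ≠ 2 * A ^ 4 + 2 * c * B ^ 4 := by decide

lemma no2 (n : ℕ) (hodd : n % 2 = 1) (h1 : n % 8 ≠ 1) (h7 : n % 8 ≠ 7)
    (w z : ℚ_[2]) (he : w ^ 2 = 2 + 2 * (n : ℚ_[2]) * z ^ 4) : False := by
  have hc : (n : ZMod (2^4)) = 3 ∨ (n : ZMod (2^4)) = 5 ∨ (n : ZMod (2^4)) = 11 ∨
      (n : ZMod (2^4)) = 13 := by
    have hm : n % 2 ^ 4 = 3 ∨ n % 2 ^ 4 = 5 ∨ n % 2 ^ 4 = 11 ∨ n % 2 ^ 4 = 13 := by omega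
    have hcast : (n : ZMod (2^4)) = ((n % 2 ^ 4 : ℕ) : ZMod (2^4)) :=
      (ZMod.natCast_mod n (2 ^ 4)).symm
    rcases hm with h | h | h | h <;> rw [hcast, h] <;> simp
  have hnorm2 : ‖(2 : ℚ_[2])‖ = 2⁻¹ := by
    have := @Padic.norm_p 2 _
    norm_num at this ⊢
    exact_mod_cast this
  have hnormn : ‖(n : ℚ_[2])‖ ≤ 1 := by
    have := @Padic.norm_int_le_one 2 _ (n : ℤ)
    push_cast at this
    exact this
  by_cases hz : ‖z‖ ≤ 1
  · -- z is a 2-adic integer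
    have hw : ‖w‖ ≤ 1 := by
      have h1' : ‖w‖ ^ 2 = ‖2 + 2 * (n : ℚ_[2]) * z ^ 4‖ := by rw [← norm_pow, he]
      have h2' : ‖2 + 2 * (n : ℚ_[2]) * z ^ 4‖ ≤ 1 := by
        calc ‖2 + 2 * (n : ℚ_[2]) * z ^ 4‖ ≤ ‖(2:ℚ_[2])‖ + ‖2 * (n : ℚ_[2]) * z ^ 4‖ :=
              norm_add_le _ _
          _ = 2⁻¹ + 2⁻¹ * (‖(n : ℚ_[2])‖ * ‖z‖ ^ 4) := by
              rw [norm_mul, norm_mul, norm_pow, hnorm2]; ring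
          _ ≤ 2⁻¹ + 2⁻¹ * (1 * 1) := by
              have : ‖z‖ ^ 4 ≤ 1 := pow_le_one₀ (norm_nonneg _) hz
              gcongr
          _ = 1 := by norm_num
      nlinarith [norm_nonneg w]
    set W : ℤ_[2] := ⟨w, hw⟩
    set Z : ℤ_[2] := ⟨z, hz⟩
    have hWZ : W ^ 2 = 2 + 2 * (n : ℤ_[2]) * Z ^ 4 := by
      apply PadicInt.ext
      push_cast
      exact he
    have h16 := congrArg (PadicInt.toZModPow (p := 2) 4) hWZ
    simp only [map_pow, map_add, map_mul, map_natCast, map_ofNat] at h16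
    refine key16 (n : ZMod (2^4)) (PadicInt.toZModPow 4 W) 1 (PadicInt.toZModPow 4 Z)
      hc (Or.inl rfl) ?_
    rw [h16]; ring
  · -- z has norm > 1
    push_neg at hz
    have hz0 : z ≠ 0 := by
      intro h; rw [h, norm_zero] at hz; linarith
    set t : ℚ_[2] := z⁻¹ with ht
    have hzt : z * t = 1 := mul_inv_cancel₀ hz0
    have htn : ‖t‖ ≤ 1 := by
      rw [ht, norm_inv]
      rw [inv_le_one_iff₀]
      right; linarith
    have heB : (w * t ^ 2) ^ 2 = 2 * t ^ 4 + 2 * (n : ℚ_[2]) := by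
      linear_combination t ^ 4 * he +
        2 * (n : ℚ_[2]) * ((z*t)^3 + (z*t)^2 + (z*t) + 1) * hzt
    have hW : ‖w * t ^ 2‖ ≤ 1 := by
      have h1' : ‖w * t ^ 2‖ ^ 2 = ‖2 * t ^ 4 + 2 * (n : ℚ_[2])‖ := by
        rw [← norm_pow, heB]
      have h2' : ‖2 * t ^ 4 + 2 * (n : ℚ_[2])‖ ≤ 1 := by
        calc ‖2 * t ^ 4 + 2 * (n : ℚ_[2])‖ ≤ ‖2 * t ^ 4‖ + ‖2 * (n : ℚ_[2])‖ :=
              norm_add_le _ _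
          _ = 2⁻¹ * ‖t‖ ^ 4 + 2⁻¹ * ‖(n : ℚ_[2])‖ := by
              rw [norm_mul, norm_mul, norm_pow, hnorm2]
          _ ≤ 2⁻¹ * 1 + 2⁻¹ * 1 := by
              have : ‖t‖ ^ 4 ≤ 1 := pow_le_one₀ (norm_nonneg _) htn
              gcongr
          _ = 1 := by norm_num
      nlinarith [norm_nonneg (w * t ^ 2)]
    set W : ℤ_[2] := ⟨w * t ^ 2, hW⟩
    set T : ℤ_[2] := ⟨t, htn⟩
    have hWT : W ^ 2 = 2 * T ^ 4 + 2 * (n : ℤ_[2]) := by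
      apply PadicInt.ext
      push_cast
      exact heB
    have h16 := congrArg (PadicInt.toZModPow (p := 2) 4) hWT
    simp only [map_pow, map_add, map_mul, map_natCast, map_ofNat] at h16
    refine key16 (n : ZMod (2^4)) (PadicInt.toZModPow 4 W) (PadicInt.toZModPow 4 T) 1
      hc (Or.inr rfl) ?_
    rw [h16]; ring

lemma realneg' (D P Q : ℝ) (hD : D < 0) (hP : 0 < P) (hQ : 0 < Q)
    (w z : ℝ) (he : D * w ^ 2 = D ^ 2 + 4 * P * Q * z ^ 4) : False := by
  nlinarith [sq_nonneg w, sq_nonneg (z ^ 2), mul_pos hP hQ,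
    mul_nonneg (mul_pos hP hQ).le (sq_nonneg (z ^ 2)),
    mul_nonneg (neg_nonneg.2 hD.le) (sq_nonneg w),
    mul_pos (neg_pos.2 hD) (neg_pos.2 hD)]

/-- Let `p, q` be distinct odd primes with `pq ≢ ±1 (mod 8)`, and
`D = {±1, ±2, ±p, ±q, ±2p, ±2q, ±pq, ±2pq}`. If `d ∈ D` is everywhere locally
admissible (the homogeneous space `d·w² = d² + 4pq·z⁴` has a nontrivial point over
`ℝ`, `ℚ₂`, `ℚ_p`, and `ℚ_q`), then `d ∈ {1, p, q, pq, 2p, 2q, 2pq}`. -/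
theorem stmt17 (p q : ℕ) [hp : Fact p.Prime] [hq : Fact q.Prime]
    (hp2 : p ≠ 2) (hq2 : q ≠ 2) (hpq : p ≠ q)
    (h1 : (p * q) % 8 ≠ 1) (h7 : (p * q) % 8 ≠ 7)
    (d : ℤ)
    (hd : d ∈ ({1, -1, 2, -2, (p : ℤ), -(p : ℤ), (q : ℤ), -(q : ℤ),
      2 * (p : ℤ), -(2 * (p : ℤ)), 2 * (q : ℤ), -(2 * (q : ℤ)),
      (p : ℤ) * q, -((p : ℤ) * q), 2 * (p : ℤ) * q, -(2 * (p : ℤ) * q)} : Set ℤ))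
    (hR : ∃ w z : ℝ, (w, z) ≠ (0, 0) ∧
      (d : ℝ) * w ^ 2 = (d : ℝ) ^ 2 + 4 * (p : ℝ) * q * z ^ 4)
    (h2 : ∃ w z : ℚ_[2], (w, z) ≠ (0, 0) ∧
      (d : ℚ_[2]) * w ^ 2 = (d : ℚ_[2]) ^ 2 + 4 * (p : ℚ_[2]) * q * z ^ 4)
    (hp' : ∃ w z : ℚ_[p], (w, z) ≠ (0, 0) ∧
      (d : ℚ_[p]) * w ^ 2 = (d : ℚ_[p]) ^ 2 + 4 * (p : ℚ_[p]) * q * z ^ 4)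
    (hq' : ∃ w z : ℚ_[q], (w, z) ≠ (0, 0) ∧
      (d : ℚ_[q]) * w ^ 2 = (d : ℚ_[q]) ^ 2 + 4 * (p : ℚ_[q]) * q * z ^ 4) :
    d ∈ ({1, (p : ℤ), (q : ℤ), (p : ℤ) * q, 2 * (p : ℤ), 2 * (q : ℤ),
      2 * (p : ℤ) * q} : Set ℤ) := by
  have hp3 : 3 ≤ p := by have := hp.out.two_le; omega
  have hq3 : 3 ≤ q := by have := hq.out.two_le; omega
  have hpr : (0 : ℝ) < p := by exact_mod_cast Nat.lt_of_lt_of_le (by norm_num) hp3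
  have hqr : (0 : ℝ) < q := by exact_mod_cast Nat.lt_of_lt_of_le (by norm_num) hq3
  have hodd : (p * q) % 2 = 1 :=
    Nat.odd_iff.mp ((hp.out.odd_of_ne_two hp2).mul (hq.out.odd_of_ne_two hq2))
  simp only [Set.mem_insert_iff, Set.mem_singleton_iff] at hd ⊢
  obtain ⟨w, z, -, he⟩ := hR
  rcases hd with rfl | rfl | rfl | rfl | rfl | rfl | rfl | rfl | rfl | rfl | rfl | rfl |
    rfl | rfl | rfl | rfl
  · exact Or.inl rfl
  · exact (realneg' _ _ _ (by norm_num) hpr hqr w z he).elim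
  · -- d = 2 : excluded 2-adically
    exfalso
    obtain ⟨w2, z2, -, he2⟩ := h2
    apply no2 (p * q) hodd h1 h7 w2 z2
    have h20 : (2 : ℚ_[2]) ≠ 0 := two_ne_zero
    apply mul_left_cancel₀ h20
    push_cast at he2 ⊢
    linear_combination he2
  · exact (realneg' _ _ _ (by norm_num) hpr hqr w z he).elim
  · exact Or.inr (Or.inl rfl)
  · exact (realneg' _ _ _ (by push_cast; linarith) hpr hqr w z he).elim
  · exact Or.inr (Or.inr (Or.inl rfl))
  · exact (realneg' _ _ _ (by push_cast; linarith) hpr hqr w z he).elim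
  · exact Or.inr (Or.inr (Or.inr (Or.inr (Or.inl rfl))))
  · exact (realneg' _ _ _ (by push_cast; linarith) hpr hqr w z he).elim
  · exact Or.inr (Or.inr (Or.inr (Or.inr (Or.inr (Or.inl rfl)))))
  · exact (realneg' _ _ _ (by push_cast; linarith) hpr hqr w z he).elim
  · exact Or.inr (Or.inr (Or.inr (Or.inl rfl)))
  · exact (realneg' _ _ _ (by push_cast; nlinarith) hpr hqr w z he).elim
  · exact Or.inr (Or.inr (Or.inr (Or.inr (Or.inr (Or.inr rfl)))))
  · exact (realneg' _ _ _ (by push_cast; nlinarith) hpr hqr w z he).elim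
end
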